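/- The graph T — obtained from a path x_1 x_2 x_3 x_4 x_5 by attaching a path x_3 x_6 x_7 of length two at the middle vertex — is not a co-TT graph. -/

import Mathlib

/-!
In a co-TT representation the middle vertex `v` of an induced path `u v w` is *positive*,
`l v ≤ r v`, and two distinct nonadjacent vertices `u, w` satisfy `r u < l w` or `r w < l u`.
Hence the three neighbours `x₂, x₄, x₆` of `x₃` in `T` carry pairwise disjoint genuine intervals
`[l, r]`, one of which lies between the other two. Since `x₃` meets both outer intervals, its
interval covers the middle one, and then the leaf attached to the middle neighbour is forced to
be adjacent to `x₃`.
-/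

/-- `G` is a co-TT (signed-interval) graph. -/
def IsCoTT {V : Type*} (G : SimpleGraph V) : Prop :=
  ∃ l r : V → ℝ, ∀ u v : V, u ≠ v → (G.Adj u v ↔ l u ≤ r v ∧ l v ≤ r u)

/-- The graph `T`: path `x₁x₂x₃x₄x₅` (vertices `0,…,4`) with a path `x₃x₆x₇`
(`2 — 5 — 6`) attached at the middle vertex. -/
def Tgraph : SimpleGraph (Fin 7) := SimpleGraph.fromRel (fun a b =>
  (a = 0 ∧ b = 1) ∨ (a = 1 ∧ b = 2) ∨ (a = 2 ∧ b = 3) ∨ (a = 3 ∧ b = 4) ∨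
  (a = 2 ∧ b = 5) ∨ (a = 5 ∧ b = 6))

def IsCoTTRepresentation {V : Type*} (G : SimpleGraph V) (l r : V → ℝ) : Prop :=
  ∀ u v : V, u ≠ v → (G.Adj u v ↔ l u ≤ r v ∧ l v ≤ r u)

def SimpleGraph.IsInducedP3 {V : Type*} (G : SimpleGraph V) (u v w : V) : Prop :=
  G.Adj u v ∧ G.Adj v w ∧ u ≠ w ∧ ¬ G.Adj u w

namespace IsCoTTRepresentation

variable {V : Type*} {G : SimpleGraph V} {l r : V → ℝ} {u v w a b c a' b' c' : V}

theorem le_of_adj (h : IsCoTTRepresentation G l r) (huv : G.Adj u v) :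
    l u ≤ r v ∧ l v ≤ r u :=
  (h u v huv.ne).mp huv

theorem lt_or_lt_of_not_adj (h : IsCoTTRepresentation G l r) (huv : u ≠ v)
    (hn : ¬ G.Adj u v) : r u < l v ∨ r v < l u := by
  rw [h u v huv, not_and_or, not_le, not_le] at hn
  exact hn.symm

theorem le_of_isInducedP3 (h : IsCoTTRepresentation G l r) (hp : G.IsInducedP3 u v w) :
    l v ≤ r v := by
  obtain ⟨huv, hvw, huw, hn⟩ := hp
  obtain ⟨huv₁, huv₂⟩ := h.le_of_adj huv
  obtain ⟨hvw₁, hvw₂⟩ := h.le_of_adj hvw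
  rcases h.lt_or_lt_of_not_adj huw hn with hlt | hlt <;> linarith

/-- If `b` lies strictly between `a` and `c`, every neighbour of both `a` and `c` covers `b`,
so it is adjacent to every neighbour of `b`. -/
theorem not_between (h : IsCoTTRepresentation G l r) (hab : r a < l b) (hbc : r b < l c)
    (hva : G.Adj v a) (hvc : G.Adj v c) (hb : G.IsInducedP3 v b b') : False := by
  obtain ⟨-, hbb', hvb', hn⟩ := hb
  obtain ⟨hva₁, -⟩ := h.le_of_adj hva
  obtain ⟨-, hvc₂⟩ := h.le_of_adj hvc
  obtain ⟨hbb₁, hbb₂⟩ := h.le_of_adj hbb'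
  rcases h.lt_or_lt_of_not_adj hvb' hn with hlt | hlt <;> linarith

theorem not_tripod (h : IsCoTTRepresentation G l r)
    (ha : G.IsInducedP3 v a a') (hb : G.IsInducedP3 v b b') (hc : G.IsInducedP3 v c c')
    (hab : G.IsInducedP3 a v b) (hbc : G.IsInducedP3 b v c) (hca : G.IsInducedP3 c v a) :
    False := by
  have hva := ha.1
  have hvb := hb.1
  have hvc := hc.1
  have hpa := h.le_of_isInducedP3 ha
  have hpb := h.le_of_isInducedP3 hb
  have hpc := h.le_of_isInducedP3 hc
  rcases h.lt_or_lt_of_not_adj hab.2.2.1 hab.2.2.2 with hab' | hba' <;>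
  rcases h.lt_or_lt_of_not_adj hbc.2.2.1 hbc.2.2.2 with hbc' | hcb' <;>
  rcases h.lt_or_lt_of_not_adj hca.2.2.1 hca.2.2.2 with hca' | hac'
  · linarith
  · exact h.not_between hab' hbc' hva hvc hb
  · exact h.not_between hca' hab' hvc hvb ha
  · exact h.not_between hac' hcb' hva hvb hc
  · exact h.not_between hbc' hca' hvb hva hc
  · exact h.not_between hba' hac' hvb hvc ha
  · exact h.not_between hcb' hba' hvc hva hb
  · linarith

end IsCoTTRepresentation

theorem Tgraph_not_isCoTT : ¬ IsCoTT Tgraph := by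
  rintro ⟨l, r, h⟩
  refine IsCoTTRepresentation.not_tripod (G := Tgraph) (v := 2) h
    (a := 1) (a' := 0) (b := 3) (b' := 4) (c := 5) (c' := 6) ?_ ?_ ?_ ?_ ?_ ?_ <;>
  simp [SimpleGraph.IsInducedP3, Tgraph]
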